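/- Let K be a field and S = K[x_1, ..., x_n] the polynomial ring with n ≥ 2. There is no squarefree monomial ideal I ⊆ S such that the set of associated primes of S/I^s equals {(x_1), (x_2), (x_1, x_2)} for all sufficiently large s; that is, the set {(x_1), (x_2), (x_1, x_2)} is not Ass^∞(I) for any squarefree monomial ideal I. -/

import Mathlib

/-!
If `(x₁)` is an associated prime of `S/I^s`, it contains `I`, so every squarefree generator
of `I` has `x₁`-exponent exactly one and every monomial generator of `I^s` has `x₁`-exponent
exactly `s`. For such a monomial ideal, `x₁ f ∈ I^s` and `x₂ f ∈ I^s` force `f ∈ I^s`, so no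
nonzero element of `S/I^s` is killed by `(x₁, x₂)`, and `(x₁, x₂)` cannot be associated too.
-/

open MvPolynomial

/-- A squarefree monomial ideal: an ideal generated by squarefree monomials,
that is, monomials in which each variable occurs with exponent at most 1. -/
def IsSquarefreeMonomialIdeal {K : Type*} [Field K] {n : ℕ}
    (I : Ideal (MvPolynomial (Fin n) K)) : Prop :=
  ∃ A : Set (Fin n →₀ ℕ), (∀ a ∈ A, ∀ i, a i ≤ 1) ∧
    I = Ideal.span ((fun a => (monomial a (1 : K) : MvPolynomial (Fin n) K)) '' A)

section AssociatedPrime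

variable {R : Type*} [CommRing R] {J p : Ideal R}

theorem IsAssociatedPrime.le_of_quotient_pow {s : ℕ} (h : IsAssociatedPrime p (R ⧸ J ^ s)) :
    J ≤ p :=
  have := h.isPrime
  Ideal.IsPrime.le_of_pow_le <| by
    simpa [Submodule.annihilator_top, Ideal.annihilator_quotient] using h.annihilator_le

theorem IsAssociatedPrime.exists_notMem_forall_mul_mem [IsNoetherianRing R]
    (h : IsAssociatedPrime p (R ⧸ J)) : ∃ f ∉ J, ∀ r ∈ p, r * f ∈ J := by
  obtain ⟨hp, x, rfl⟩ := isAssociatedPrime_iff.mp h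
  obtain ⟨f, rfl⟩ := Ideal.Quotient.mk_surjective x
  refine ⟨f, fun hf => hp.ne_top ?_, fun r hr => ?_⟩
  · rw [Ideal.Quotient.eq_zero_iff_mem.mpr hf]
    ext r
    simp [Submodule.mem_colon_singleton]
  · rw [Submodule.mem_colon_singleton, Submodule.mem_bot] at hr
    exact Ideal.Quotient.eq_zero_iff_mem.mp hr

end AssociatedPrime

open Pointwise in
theorem Finsupp.apply_eq_mul_of_mem_nsmul {σ : Type*} {A : Set (σ →₀ ℕ)} {i : σ} {m : ℕ}
    (hA : ∀ a ∈ A, a i = m) (s : ℕ) : ∀ b ∈ s • A, b i = s * m := by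
  induction s with
  | zero => simp
  | succ s ih =>
    rintro _ ⟨b, hb, a, ha, rfl⟩
    rw [Finsupp.add_apply, ih b hb, hA a ha]
    ring

namespace MvPolynomial

open Pointwise

variable {σ R : Type*} [CommSemiring R]

theorem monomial_one_image_mul (A B : Set (σ →₀ ℕ)) :
    (fun a => monomial a (1 : R)) '' A * (fun a => monomial a (1 : R)) '' B =
      (fun a => monomial a (1 : R)) '' (A + B) := by
  rw [← Set.image2_mul, Set.image2_image_left, Set.image2_image_right, ← Set.image2_add,
    Set.image_image2]
  simp only [monomial_mul, one_mul]

theorem span_monomial_one_image_pow (A : Set (σ →₀ ℕ)) (s : ℕ) :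
    Ideal.span ((fun a => monomial a (1 : R)) '' A) ^ s =
      Ideal.span ((fun a => monomial a (1 : R)) '' (s • A)) := by
  induction s with
  | zero => simp [Ideal.span_singleton_one]
  | succ s ih => rw [pow_succ, ih, Ideal.span_mul_span', monomial_one_image_mul, succ_nsmul]

theorem monomial_one_mem_span_X_iff [Nontrivial R] {a : σ →₀ ℕ} {i : σ} :
    monomial a (1 : R) ∈ Ideal.span {X i} ↔ a i ≠ 0 := by
  simp [Ideal.mem_span_singleton, X_dvd_monomial]

/- For a monomial `d` of `f` take generators `b ≤ d + eᵢ` and `c ≤ d + eⱼ`: then `b ≤ d` away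
from `i`, and `b i = m = c i ≤ d i` since `i ≠ j`. -/
theorem mem_span_monomial_one_image_of_X_mul_mem {B : Set (σ →₀ ℕ)} {i j : σ}
    (hij : i ≠ j) {m : ℕ} (hB : ∀ b ∈ B, b i = m) {f : MvPolynomial σ R}
    (hi : X i * f ∈ Ideal.span ((fun a => monomial a (1 : R)) '' B))
    (hj : X j * f ∈ Ideal.span ((fun a => monomial a (1 : R)) '' B)) :
    f ∈ Ideal.span ((fun a => monomial a (1 : R)) '' B) := by
  classical
  rw [mem_ideal_span_monomial_image] at hi hj ⊢
  intro d hd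
  have hd' : ∀ k, Finsupp.single k 1 + d ∈ (X k * f).support := fun k => by
    rwa [mem_support_iff, coeff_X_mul, ← mem_support_iff]
  obtain ⟨b, hbB, hb⟩ := hi _ (hd' i)
  obtain ⟨c, hcB, hc⟩ := hj _ (hd' j)
  refine ⟨b, hbB, fun k => ?_⟩
  have hbk := hb k
  have hci := hc i
  simp only [Finsupp.coe_add, Pi.add_apply, Finsupp.single_apply, if_neg hij.symm] at hbk hci
  have := hB b hbB
  have := hB c hcB
  split_ifs at hbk with hik
  · subst hik; omega
  · omega

end MvPolynomial

/-- The set `{(x_1), (x_2), (x_1, x_2)}` is not `Ass^∞(I)` for any squarefree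
monomial ideal `I` of `S = K[x_1, ..., x_n]` (`n ≥ 2`). -/
theorem stmt9 {K : Type*} [Field K] (n : ℕ) (hn : 2 ≤ n) :
    ¬ ∃ I : Ideal (MvPolynomial (Fin n) K), IsSquarefreeMonomialIdeal I ∧
      ∃ s₀ : ℕ, ∀ s ≥ s₀,
        associatedPrimes (MvPolynomial (Fin n) K) (MvPolynomial (Fin n) K ⧸ I ^ s) =
          ({Ideal.span {X (⟨0, by omega⟩ : Fin n)},
            Ideal.span {X (⟨1, by omega⟩ : Fin n)},
            Ideal.span {X (⟨0, by omega⟩ : Fin n), X (⟨1, by omega⟩ : Fin n)}} :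
              Set (Ideal (MvPolynomial (Fin n) K))) := by
  rintro ⟨_, ⟨A, hsf, rfl⟩, s, hass⟩
  set x₁ : Fin n := ⟨0, by omega⟩
  set x₂ : Fin n := ⟨1, by omega⟩
  have hAss := Set.ext_iff.mp (hass s le_rfl)
  have h₁ := (hAss (Ideal.span {X x₁})).mpr (by simp)
  have h₁₂ := (hAss (Ideal.span {X x₁, X x₂})).mpr (by simp)
  have hA : ∀ a ∈ A, a x₁ = 1 := fun a ha => by
    have := monomial_one_mem_span_X_iff.mp <|
      h₁.le_of_quotient_pow (Ideal.subset_span ⟨a, ha, rfl⟩)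
    have := hsf a ha x₁
    omega
  obtain ⟨f, hf, hmul⟩ := h₁₂.exists_notMem_forall_mul_mem
  rw [span_monomial_one_image_pow] at hf hmul
  have hx : x₁ ≠ x₂ := by simp [x₁, x₂]
  exact hf <| mem_span_monomial_one_image_of_X_mul_mem hx
    (Finsupp.apply_eq_mul_of_mem_nsmul hA s) (hmul _ (Ideal.subset_span (by simp)))
    (hmul _ (Ideal.subset_span (by simp)))
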